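/- Let I ⊆ L be finite, let ι : I → J be a bijection onto a subset J ⊆ L with I ∩ J = ∅, let (p_M)_{M ∈ D_I} be a probability distribution, and set Φ = Σ_{M ∈ D_I} p_M^{1/2} f_{M ι(M)} ∈ H and ρ_I = Σ_{M ∈ D_I} p_M |f_M⟩⟨f_M|. Then ⟨Φ, aΦ⟩ = Tr(ρ_I a) for all a ∈ A(I); that is, the pure state given by the vector Φ reduces to the state ρ_I on A(I). -/

import Mathlib

/-!
Write `e_S` for the basis vector indexed by `S`, the wedge of the `e_l`, `l ∈ S`, in increasing
order; then `f_M = ± e_S` whenever `M` enumerates `S`. For `T` disjoint from `I`, right wedge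
multiplication `V_T` by `e_T`, cut down to the span of the `e_S` with `S ⊆ I`, commutes with
`a_l` and `a*_l` for `l ∈ I`, hence with all of `A(I)`, and `V_T* V_T' = δ_{T T'} V_∅`.
Since `f_{M ι(M)} = ± V_{ι(S)} f_M` and `S ↦ ι(S)` is injective, the cross terms of `⟨Φ, aΦ⟩`
vanish and the diagonal ones are `p_S ⟨f_M, a f_M⟩ = Tr(p_S |f_M⟩⟨f_M| a)`.
-/

noncomputable section
open scoped InnerProductSpace ComplexConjugate
open ContinuousLinearMap

namespace Fermion

variable (L : Type) [Fintype L] [LinearOrder L]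

/-- The fermionic Fock space over the one-particle space `h = ℓ²(L)`, realized concretely
via its orthonormal basis indexed by the finite subsets of `L` (the vectors `f_M`). -/
abbrev FockSpace := EuclideanSpace ℂ (Finset L)

variable {L}

/-- The vacuum vector `Ψ = f_∅`. -/
def vac : FockSpace L := EuclideanSpace.single ∅ 1

/-- Jordan–Wigner sign factor. -/
def jwSign (l : L) (S : Finset L) : ℂ := (-1 : ℂ) ^ (S.filter (fun k => k < l)).card

/-- The creation operator `a*_l = a*(e_l)`. -/
def cre (l : L) : FockSpace L →L[ℂ] FockSpace L :=
  LinearMap.toContinuousLinearMap <|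
    (EuclideanSpace.basisFun (Finset L) ℂ).toBasis.constr ℂ fun S =>
      if l ∈ S then 0 else jwSign l S • EuclideanSpace.single (insert l S) 1

/-- The annihilation operator `a_l = a(e_l)`. -/
def ann (l : L) : FockSpace L →L[ℂ] FockSpace L := ContinuousLinearMap.adjoint (cre l)

/-- The vector `f_{(l_1,…,l_n)} = a*_{l_1} ⋯ a*_{l_n} Ψ  (= P (e_{l_1} ⊗ ⋯ ⊗ e_{l_n}))`. -/
def fvec (M : List L) : FockSpace L := M.foldr (fun l v => cre l v) vac

/-- The algebra `A(I)` : the unital *-subalgebra of `B(H)` generated by `{a_l : l ∈ I}`. -/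
def A (I : Finset L) : StarSubalgebra ℂ (FockSpace L →L[ℂ] FockSpace L) :=
  StarAlgebra.adjoin ℂ (ann '' (I : Set L))

/-- The trace on `B(H)`. -/
def Tr (T : FockSpace L →L[ℂ] FockSpace L) : ℂ := LinearMap.trace ℂ (FockSpace L) T

/-- The rank-one operator `|x⟩⟨y|`. -/
def ketbra (x y : FockSpace L) : FockSpace L →L[ℂ] FockSpace L :=
  (ContinuousLinearMap.toSpanSingleton ℂ x).comp (innerSL ℂ y)

/-- A valid choice of `D_I`: `D S` enumerates the finite set `S` without repetitions. -/
def IsEnum (D : Finset L → List L) : Prop := ∀ S : Finset L, (D S).Nodup ∧ (D S).toFinset = S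

/-- The entangled vector `Φ = Σ_{M ∈ D_I} p_M^{1/2} f_{M ι(M)}`. -/
def Phi (D : Finset L → List L) (p : Finset L → ℝ) (I : Finset L) (ι : L → L) : FockSpace L :=
  ∑ S ∈ I.powerset, (Real.sqrt (p S) : ℂ) • fvec (D S ++ (D S).map ι)

/-- The state `φ(x) = ⟨Φ, xΦ⟩`. -/
def phi (D : Finset L → List L) (p : Finset L → ℝ) (I : Finset L) (ι : L → L)
    (x : FockSpace L →L[ℂ] FockSpace L) : ℂ :=
  ⟪Phi D p I ι, x (Phi D p I ι)⟫_ℂ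

end Fermion

lemma Finset.union_eq_union_iff_of_subset_of_disjoint {α : Type*} [DecidableEq α]
    {I R S T T' : Finset α} (hR : R ⊆ I) (hS : S ⊆ I) (hT : Disjoint I T) (hT' : Disjoint I T') :
    R ∪ T = S ∪ T' ↔ R = S ∧ T = T' := by
  refine ⟨fun h => ⟨?_, ?_⟩, fun h => h.1 ▸ h.2 ▸ rfl⟩
  · have := congrArg (· ∩ I) h
    simpa [Finset.union_inter_distrib_right, Finset.inter_eq_left.mpr hR,
      Finset.inter_eq_left.mpr hS, Finset.disjoint_iff_inter_eq_empty.mp hT.symm,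
      Finset.disjoint_iff_inter_eq_empty.mp hT'.symm] using this
  · have := congrArg (· \ I) h
    simpa [Finset.union_sdiff_distrib, Finset.sdiff_eq_empty_iff_subset.mpr hR,
      Finset.sdiff_eq_empty_iff_subset.mpr hS, hT.symm.sdiff_eq_left,
      hT'.symm.sdiff_eq_left] using this

lemma inner_sum_smul_apply_sum_smul {𝕜 E ι : Type*} [RCLike 𝕜] [NormedAddCommGroup E]
    [InnerProductSpace 𝕜 E] [DecidableEq ι] (s : Finset ι) (c : ι → 𝕜) (v : ι → E) (w : ι → 𝕜)
    (a : E →L[𝕜] E) (h : ∀ i ∈ s, ∀ j ∈ s, ⟪v i, a (v j)⟫_𝕜 = if i = j then w i else 0) :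
    ⟪∑ i ∈ s, c i • v i, a (∑ j ∈ s, c j • v j)⟫_𝕜 = ∑ i ∈ s, conj (c i) * c i * w i := by
  simp only [map_sum, map_smul, sum_inner, inner_sum, inner_smul_left, inner_smul_right]
  refine Finset.sum_congr rfl fun i hi => ?_
  rw [Finset.sum_eq_single_of_mem i hi fun j hj hji => by rw [h j hj i hi, if_neg hji, mul_zero],
    h i hi i hi, if_pos rfl]
  ring

namespace Fermion

section

variable {L : Type} [LinearOrder L]

lemma jwSign_mul_self (l : L) (S : Finset L) : jwSign l S * jwSign l S = 1 := by
  rw [jwSign, ← pow_add, ← two_mul, pow_mul]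
  norm_num

lemma conj_jwSign (l : L) (S : Finset L) : conj (jwSign l S) = jwSign l S := by
  simp [jwSign]

lemma jwSign_empty (l : L) : jwSign l ∅ = 1 := by simp [jwSign]

lemma jwSign_erase (l : L) (S : Finset L) : jwSign l (S.erase l) = jwSign l S := by
  rw [jwSign, jwSign, Finset.filter_erase, Finset.erase_eq_of_notMem (by simp)]

lemma jwSign_union (l : L) {S T : Finset L} (h : Disjoint S T) :
    jwSign l (S ∪ T) = jwSign l S * jwSign l T := by
  rw [jwSign, jwSign, jwSign, Finset.filter_union, Finset.card_union_of_disjoint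
    (Finset.disjoint_filter_filter h), pow_add]

/-- The sign in `e_S ∧ e_T = wedgeSign S T • e_{S ∪ T}` for disjoint `S` and `T`. -/
def wedgeSign (S T : Finset L) : ℂ := ∏ l ∈ S, jwSign l T

lemma wedgeSign_mul_self (S T : Finset L) : wedgeSign S T * wedgeSign S T = 1 := by
  rw [wedgeSign, ← Finset.prod_mul_distrib]
  exact Finset.prod_eq_one fun l _ => jwSign_mul_self l T

lemma conj_wedgeSign (S T : Finset L) : conj (wedgeSign S T) = wedgeSign S T := by
  simp [wedgeSign, conj_jwSign]

lemma wedgeSign_empty_right (S : Finset L) : wedgeSign S ∅ = 1 := by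
  simp [wedgeSign, jwSign_empty]

lemma IsEnum.mem_iff {D : Finset L → List L} (hD : IsEnum D) {S : Finset L} {l : L} :
    l ∈ D S ↔ l ∈ S := by
  rw [← List.mem_toFinset, (hD S).2]

end

section

variable {L : Type} [Fintype L]

lemma Tr_ketbra_mul (x y : FockSpace L) (a : FockSpace L →L[ℂ] FockSpace L) :
    Tr (ketbra x y * a) = ⟪y, a x⟫_ℂ := by
  have : ((ketbra x y * a : FockSpace L →L[ℂ] FockSpace L) : FockSpace L →ₗ[ℂ] FockSpace L) =
      LinearMap.smulRight ((innerSL ℂ y).comp a : FockSpace L →ₗ[ℂ] ℂ) x := by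
    ext z
    rfl
  rw [Tr, this, LinearMap.trace_smulRight]
  rfl

lemma Tr_sum_smul_ketbra_mul {ι : Type*} (s : Finset ι) (q : ι → ℂ) (x y : ι → FockSpace L)
    (a : FockSpace L →L[ℂ] FockSpace L) :
    Tr ((∑ i ∈ s, q i • ketbra (x i) (y i)) * a) = ∑ i ∈ s, q i * ⟪y i, a (x i)⟫_ℂ := by
  simp only [Finset.sum_mul, smul_mul_assoc, ← Tr_ketbra_mul]
  simp [Tr, ContinuousLinearMap.toLinearMap_sum, map_sum]

end

section

variable {L : Type} [Fintype L] [LinearOrder L]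

lemma ext_single {A B : FockSpace L →L[ℂ] FockSpace L}
    (h : ∀ S : Finset L, A (EuclideanSpace.single S 1) = B (EuclideanSpace.single S 1)) :
    A = B :=
  ContinuousLinearMap.coe_injective <|
    (EuclideanSpace.basisFun (Finset L) ℂ).toBasis.ext (by simpa using h)

lemma adjoint_apply_apply (B : FockSpace L →L[ℂ] FockSpace L) (x : FockSpace L) (S : Finset L) :
    adjoint B x S = ⟪B (EuclideanSpace.single S 1), x⟫_ℂ := by
  rw [← adjoint_inner_right, EuclideanSpace.inner_single_left, map_one, one_mul]

lemma cre_single (l : L) (S : Finset L) :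
    cre l (EuclideanSpace.single S 1) =
      if l ∈ S then 0 else jwSign l S • EuclideanSpace.single (insert l S) 1 := by
  rw [cre, LinearMap.coe_toContinuousLinearMap', ← EuclideanSpace.basisFun_apply,
    ← OrthonormalBasis.coe_toBasis, Module.Basis.constr_basis]

lemma ann_single (l : L) (S : Finset L) :
    ann l (EuclideanSpace.single S 1) =
      if l ∈ S then jwSign l S • EuclideanSpace.single (S.erase l) 1 else 0 := by
  ext R
  rw [ann, adjoint_apply_apply, cre_single]
  by_cases hlR : l ∈ R
  · have hR : R ≠ S.erase l := fun h => by simp [h] at hlR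
    split_ifs <;> simp [hR]
  · have hinsert : insert l R = S ↔ l ∈ S ∧ R = S.erase l := by
      constructor
      · rintro rfl; simp [hlR]
      · rintro ⟨hl, rfl⟩; exact Finset.insert_erase hl
    rw [if_neg hlR, inner_smul_left, conj_jwSign, EuclideanSpace.inner_single_left]
    by_cases hS : l ∈ S <;> by_cases hR : R = S.erase l <;>
      simp_all [PiLp.single_apply, jwSign_erase]

/-- Right wedge multiplication `e_S ↦ e_S ∧ e_T`, cut down to the `e_S` with `S ⊆ I` so that
the ranges for different `T` are orthogonal. -/
def wedgeRight (I T : Finset L) : FockSpace L →L[ℂ] FockSpace L :=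
  LinearMap.toContinuousLinearMap <|
    (EuclideanSpace.basisFun (Finset L) ℂ).toBasis.constr ℂ fun S =>
      if S ⊆ I then wedgeSign S T • EuclideanSpace.single (S ∪ T) 1 else 0

lemma wedgeRight_single (I T S : Finset L) :
    wedgeRight I T (EuclideanSpace.single S 1) =
      if S ⊆ I then wedgeSign S T • EuclideanSpace.single (S ∪ T) 1 else 0 := by
  rw [wedgeRight, LinearMap.coe_toContinuousLinearMap', ← EuclideanSpace.basisFun_apply,
    ← OrthonormalBasis.coe_toBasis, Module.Basis.constr_basis]

lemma wedgeRight_vac (I T : Finset L) : wedgeRight I T vac = EuclideanSpace.single T 1 := by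
  simp [vac, wedgeRight_single, wedgeSign]

lemma commute_cre_wedgeRight {I T : Finset L} {l : L} (hl : l ∈ I) (hT : Disjoint I T) :
    Commute (cre l) (wedgeRight I T) := by
  have hlT : l ∉ T := Finset.disjoint_left.mp hT hl
  refine ext_single fun S => ?_
  simp only [mul_apply_eq_comp, wedgeRight_single, cre_single]
  by_cases hS : S ⊆ I
  · by_cases hlS : l ∈ S
    · simp [hS, hlS, cre_single]
    · have hIS : insert l S ⊆ I := Finset.insert_subset hl hS
      simp only [hS, hlS, hIS, if_true, if_false, map_smul, cre_single, wedgeRight_single,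
        Finset.mem_union, hlT, or_self, Finset.insert_union, smul_smul,
        wedgeSign, Finset.prod_insert hlS, jwSign_union l (hT.mono_left hS)]
      ring_nf
  · have hIS : ¬ insert l S ⊆ I := fun h => hS ((Finset.subset_insert l S).trans h)
    split_ifs <;> simp [hIS, wedgeRight_single]

lemma commute_ann_wedgeRight {I T : Finset L} {l : L} (hl : l ∈ I) (hT : Disjoint I T) :
    Commute (ann l) (wedgeRight I T) := by
  have hlT : l ∉ T := Finset.disjoint_left.mp hT hl
  refine ext_single fun S => ?_
  simp only [mul_apply_eq_comp, wedgeRight_single, ann_single]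
  by_cases hS : S ⊆ I
  · by_cases hlS : l ∈ S
    · have hIS : S.erase l ⊆ I := (Finset.erase_subset l S).trans hS
      simp only [hS, hlS, hIS, if_true, map_smul, ann_single, wedgeRight_single,
        Finset.mem_union, true_or, Finset.erase_union_distrib, Finset.erase_eq_of_notMem hlT,
        smul_smul, jwSign_union l (hT.mono_left hS), wedgeSign, ← Finset.mul_prod_erase S _ hlS]
      congr 1
      linear_combination (jwSign l S * ∏ k ∈ S.erase l, jwSign k T) * jwSign_mul_self l T
    · simp [hS, hlS, ann_single, hlT]
  · split_ifs with hlS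
    · have hIS : ¬ S.erase l ⊆ I := fun h => hS (by
        simpa [Finset.insert_erase hlS] using Finset.insert_subset hl h)
      simp [hIS, wedgeRight_single]
    · simp

lemma adjoint_wedgeRight_mul_wedgeRight {I T T' : Finset L} (hT : Disjoint I T)
    (hT' : Disjoint I T') :
    adjoint (wedgeRight I T) * wedgeRight I T' = if T = T' then wedgeRight I ∅ else 0 := by
  refine ext_single fun S => ?_
  ext R
  rw [mul_apply_eq_comp, adjoint_apply_apply, wedgeRight_single, wedgeRight_single]
  have hunion := Finset.union_eq_union_iff_of_subset_of_disjoint (R := R) (S := S) (I := I)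
    (T := T) (T' := T')
  by_cases hTT : T = T'
  · subst hTT
    rw [if_pos rfl, wedgeRight_single]
    by_cases hR : R ⊆ I <;> by_cases hS : S ⊆ I <;>
      simp_all [conj_wedgeSign, wedgeSign_mul_self, PiLp.single_apply,
        EuclideanSpace.inner_single_left, wedgeSign_empty_right]
    rintro rfl
    exact hR hS
  · rw [if_neg hTT]
    by_cases hR : R ⊆ I <;> by_cases hS : S ⊆ I <;>
      simp_all [EuclideanSpace.inner_single_left]

lemma commute_wedgeRight_of_mem_A {I T : Finset L} (hT : Disjoint I T)
    {a : FockSpace L →L[ℂ] FockSpace L} (ha : a ∈ A I) : Commute (wedgeRight I T) a := by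
  suffices A I ≤ StarSubalgebra.centralizer ℂ {wedgeRight I T} from
    ((StarSubalgebra.mem_centralizer_iff ℂ).mp (this ha) _ rfl).1
  refine StarAlgebra.adjoin_le ?_
  rintro _ ⟨l, hl, rfl⟩
  rw [SetLike.mem_coe, StarSubalgebra.mem_centralizer_iff]
  rintro _ rfl
  exact ⟨(commute_ann_wedgeRight hl hT).symm.eq,
    ((commute_cre_wedgeRight hl hT).star_star).symm.eq⟩

lemma inner_wedgeRight_apply_wedgeRight {I T T' : Finset L} (hT : Disjoint I T)
    (hT' : Disjoint I T') {a : FockSpace L →L[ℂ] FockSpace L} (ha : a ∈ A I)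
    (x y : FockSpace L) :
    ⟪wedgeRight I T x, a (wedgeRight I T' y)⟫_ℂ =
      if T = T' then ⟪x, a (wedgeRight I ∅ y)⟫_ℂ else 0 := by
  rw [← mul_apply_eq_comp, ← (commute_wedgeRight_of_mem_A hT' ha).eq, ← adjoint_inner_right,
    ← mul_apply_eq_comp, ← mul_assoc, adjoint_wedgeRight_mul_wedgeRight hT hT']
  split_ifs
  · rw [(commute_wedgeRight_of_mem_A (Finset.disjoint_empty_right I) ha).eq, mul_apply_eq_comp]
  · simp

lemma foldr_cre_eq_prod (M : List L) (v : FockSpace L) :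
    M.foldr (fun l w => cre l w) v = (M.map cre).prod v := by
  induction M with
  | nil => rfl
  | cons l M ih => rw [List.foldr_cons, ih, List.map_cons, List.prod_cons, mul_apply_eq_comp]

lemma fvec_eq_prod (M : List L) : fvec M = (M.map cre).prod vac :=
  foldr_cre_eq_prod M vac

lemma fvec_append (M N : List L) : fvec (M ++ N) = (M.map cre).prod (fvec N) := by
  rw [fvec, List.foldr_append, foldr_cre_eq_prod]
  rfl

lemma exists_fvec_eq_neg_one_pow_smul_single {N : List L} (hN : N.Nodup) :
    ∃ n : ℕ, fvec N = (-1 : ℂ) ^ n • EuclideanSpace.single N.toFinset 1 := by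
  induction N with
  | nil => exact ⟨0, by simp [fvec, vac]⟩
  | cons l N ih =>
    obtain ⟨n, hn⟩ := ih hN.of_cons
    have hl : l ∉ N.toFinset := by simpa using (List.nodup_cons.mp hN).1
    refine ⟨(N.toFinset.filter (· < l)).card + n, ?_⟩
    rw [← List.singleton_append, fvec_append, hn]
    simp [cre_single, hl, jwSign, smul_smul, pow_add, mul_comm]

lemma prod_cre_wedgeRight {I T : Finset L} (hT : Disjoint I T) {M : List L}
    (hM : ∀ l ∈ M, l ∈ I) (v : FockSpace L) :
    (M.map cre).prod (wedgeRight I T v) = wedgeRight I T ((M.map cre).prod v) := by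
  have : Commute (wedgeRight I T) (M.map cre).prod := Commute.list_prod_right _ _ <| by
    simpa using fun l hl => (commute_cre_wedgeRight (hM l hl) hT).symm
  rw [← mul_apply_eq_comp, ← this.eq, mul_apply_eq_comp]

lemma wedgeRight_empty_fvec {I : Finset L} {M : List L} (hM : ∀ l ∈ M, l ∈ I) :
    wedgeRight I ∅ (fvec M) = fvec M := by
  rw [fvec_eq_prod, ← prod_cre_wedgeRight (Finset.disjoint_empty_right I) hM, wedgeRight_vac]
  rfl

lemma exists_fvec_append_eq_smul_wedgeRight {I : Finset L} {M N : List L}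
    (hM : ∀ l ∈ M, l ∈ I) (hN : N.Nodup) (hT : Disjoint I N.toFinset) :
    ∃ n : ℕ, fvec (M ++ N) = (-1 : ℂ) ^ n • wedgeRight I N.toFinset (fvec M) := by
  obtain ⟨n, hn⟩ := exists_fvec_eq_neg_one_pow_smul_single hN
  refine ⟨n, ?_⟩
  rw [fvec_append, hn, ← wedgeRight_vac I, map_smul, prod_cre_wedgeRight hT hM,
    ← fvec_eq_prod]

section Entangled

variable {I : Finset L} {ι : L → L} {D : Finset L → List L}

lemma exists_fvec_entangled_eq_smul_wedgeRight (hinj : Set.InjOn ι I)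
    (hJ : Disjoint I (I.image ι)) (hD : IsEnum D) {S : Finset L} (hS : S ⊆ I) :
    ∃ n : ℕ, fvec (D S ++ (D S).map ι) = (-1 : ℂ) ^ n • wedgeRight I (S.image ι) (fvec (D S)) := by
  have hM : ∀ l ∈ D S, l ∈ I := fun l hl => hS (hD.mem_iff.mp hl)
  have hN : ((D S).map ι).toFinset = S.image ι := by
    ext
    simp [hD.mem_iff]
  rw [← hN]
  exact exists_fvec_append_eq_smul_wedgeRight hM
    ((hD S).1.map_on fun x hx y hy => hinj (hM x hx) (hM y hy))
    (hN ▸ hJ.mono_right (Finset.image_subset_image hS))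

lemma inner_fvec_entangled (hinj : Set.InjOn ι I) (hJ : Disjoint I (I.image ι)) (hD : IsEnum D)
    {a : FockSpace L →L[ℂ] FockSpace L} (ha : a ∈ A I) {S S' : Finset L} (hS : S ⊆ I)
    (hS' : S' ⊆ I) :
    ⟪fvec (D S ++ (D S).map ι), a (fvec (D S' ++ (D S').map ι))⟫_ℂ =
      if S = S' then ⟪fvec (D S), a (fvec (D S))⟫_ℂ else 0 := by
  have hT {S : Finset L} (hS : S ⊆ I) : Disjoint I (S.image ι) :=
    hJ.mono_right (Finset.image_subset_image hS)
  obtain ⟨n, hn⟩ := exists_fvec_entangled_eq_smul_wedgeRight hinj hJ hD hS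
  by_cases hSS' : S = S'
  · subst hSS'
    rw [if_pos rfl, hn, map_smul, inner_smul_left, inner_smul_right,
      inner_wedgeRight_apply_wedgeRight (hT hS) (hT hS) ha, if_pos rfl,
      wedgeRight_empty_fvec fun l hl => hS (hD.mem_iff.mp hl), ← mul_assoc]
    simp [← mul_pow]
  · obtain ⟨n', hn'⟩ := exists_fvec_entangled_eq_smul_wedgeRight hinj hJ hD hS'
    rw [if_neg hSS', hn, hn', map_smul, inner_smul_left, inner_smul_right,
      inner_wedgeRight_apply_wedgeRight (hT hS) (hT hS') ha,
      if_neg (by rwa [Finset.image_eq_image_iff_of_injOn hinj hS hS']), mul_zero, mul_zero]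

end Entangled

end

theorem entangled_state_reduces_first_general
    {L : Type} [Fintype L] [LinearOrder L]
    (I J : Finset L) (ι : L → L)
    (hinj : Set.InjOn ι (I : Set L)) (himg : I.image ι = J) (hIJ : Disjoint I J)
    (D : Finset L → List L) (hD : IsEnum D)
    (p : Finset L → ℝ)
    (hp0 : ∀ S ∈ I.powerset, 0 ≤ p S) :
    ∀ a ∈ A I,
      ⟪Phi D p I ι, a (Phi D p I ι)⟫_ℂ
        = Tr ((∑ S ∈ I.powerset, ((p S : ℝ) : ℂ) • ketbra (fvec (D S)) (fvec (D S))) * a) := by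
  intro a ha
  rw [Phi, Tr_sum_smul_ketbra_mul, inner_sum_smul_apply_sum_smul _ _ _
    (fun S => ⟪fvec (D S), a (fvec (D S))⟫_ℂ) a fun S hS S' hS' =>
      inner_fvec_entangled hinj (himg ▸ hIJ) hD ha (Finset.mem_powerset.mp hS)
        (Finset.mem_powerset.mp hS')]
  refine Finset.sum_congr rfl fun S hS => ?_
  rw [Complex.conj_ofReal, ← Complex.ofReal_mul, Real.mul_self_sqrt (hp0 S hS)]

/-- Let `I ⊆ L` be finite, `ι : I → J` a bijection onto `J ⊆ L` with
`I ∩ J = ∅`, `(p_M)_{M ∈ D_I}` a probability distribution, and set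
`Φ = Σ_{M ∈ D_I} p_M^{1/2} f_{M ι(M)}` and `ρ_I = Σ_{M ∈ D_I} p_M |f_M⟩⟨f_M|`.
Then `⟨Φ, aΦ⟩ = Tr(ρ_I a)` for all `a ∈ A(I)`. -/
theorem entangled_state_reduces_first
    {L : Type} [Fintype L] [LinearOrder L]
    (I J : Finset L) (ι : L → L)
    (hinj : Set.InjOn ι (I : Set L)) (himg : I.image ι = J) (hIJ : Disjoint I J)
    (D : Finset L → List L) (hD : IsEnum D)
    (p : Finset L → ℝ)
    (hp0 : ∀ S ∈ I.powerset, 0 ≤ p S) (hp1 : ∑ S ∈ I.powerset, p S = 1) :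
    ∀ a ∈ A I,
      ⟪Phi D p I ι, a (Phi D p I ι)⟫_ℂ
        = Tr ((∑ S ∈ I.powerset, ((p S : ℝ) : ℂ) • ketbra (fvec (D S)) (fvec (D S))) * a) :=
  entangled_state_reduces_first_general I J ι hinj himg hIJ D hD p hp0

end Fermion
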